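/- arXiv:2601.12621 — 7 statements merged into one kernel-verified Lean document; each statement's English description precedes it below -/
import Mathlib

section
/- Let M be a DFA over the binary alphabet with fewer than (K+1)·L states, and suppose q₁, …, q_n are states of M such that for each i, the states δ*(q_i, 0^h) for h < L are rejecting and δ*(q_i, 0^L) is accepting. Then the set { δ*(q_i, 0^L) : i ∈ [1, n] } has at most K elements. -/
/-- If a binary DFA `M` has fewer than `(K+1)·L` states and `q₁, …, q_n` are
states such that for each `i` the states `δ*(q_i, 0^h)` for `h < L` are
rejecting and `δ*(q_i, 0^L)` is accepting, then the set of endpoint states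
`{ δ*(q_i, 0^L) : i }` has at most `K` elements. -/
theorem endpoints_card_le {σ : Type*} [Fintype σ] [DecidableEq σ]
    (M : DFA Bool σ) (K L n : ℕ) (hK : 0 < K) (hL : 0 < L)
    (hsize : Fintype.card σ < (K + 1) * L)
    (q : Fin n → σ)
    (hrej : ∀ i, ∀ h < L, M.evalFrom (q i) (List.replicate h false) ∉ M.accept)
    (hacc : ∀ i, M.evalFrom (q i) (List.replicate L false) ∈ M.accept) :
    (Finset.image (fun i => M.evalFrom (q i) (List.replicate L false))
      Finset.univ).card ≤ K := by
  rcases Nat.eq_zero_or_pos n with hn | hn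
  · subst hn
    simp
  have : Nonempty (Fin n) := ⟨⟨0, hn⟩⟩
  set f : Fin n → σ := fun i => M.evalFrom (q i) (List.replicate L false) with hf
  -- decomposition of eval on replicates
  have hsplit : ∀ (s : σ) (a b : ℕ),
      M.evalFrom s (List.replicate (a + b) false)
        = M.evalFrom (M.evalFrom s (List.replicate a false)) (List.replicate b false) := by
    intro s a b
    rw [List.replicate_add]
    exact M.evalFrom_of_append s _ _
  -- key step lemma (asymmetric version)
  have step : ∀ (i j : Fin n) (h₁ h₂ : ℕ), h₁ < L → h₂ < L → h₁ ≤ h₂ →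
      M.evalFrom (q i) (List.replicate h₁ false)
        = M.evalFrom (q j) (List.replicate h₂ false) →
      h₁ = h₂ ∧ f i = f j := by
    intro i j h₁ h₂ hh₁ hh₂ hle heq
    have hLj : M.evalFrom (q j) (List.replicate L false)
        = M.evalFrom (q i) (List.replicate (h₁ + (L - h₂)) false) := by
      calc M.evalFrom (q j) (List.replicate L false)
          = M.evalFrom (q j) (List.replicate (h₂ + (L - h₂)) false) := by
            rw [Nat.add_sub_cancel' hh₂.le]
        _ = M.evalFrom (M.evalFrom (q j) (List.replicate h₂ false))
              (List.replicate (L - h₂) false) := hsplit _ _ _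
        _ = M.evalFrom (M.evalFrom (q i) (List.replicate h₁ false))
              (List.replicate (L - h₂) false) := by rw [heq]
        _ = M.evalFrom (q i) (List.replicate (h₁ + (L - h₂)) false) := (hsplit _ _ _).symm
    have hge : ¬ (h₁ + (L - h₂) < L) := by
      intro hlt
      exact hrej i _ hlt (hLj ▸ hacc j)
    have heqh : h₁ = h₂ := by omega
    subst heqh
    refine ⟨rfl, ?_⟩
    simp only [hf]
    calc M.evalFrom (q i) (List.replicate L false)
        = M.evalFrom (q i) (List.replicate (h₁ + (L - h₁)) false) := by
          rw [Nat.add_sub_cancel' hh₁.le]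
      _ = M.evalFrom (M.evalFrom (q i) (List.replicate h₁ false))
            (List.replicate (L - h₁) false) := hsplit _ _ _
      _ = M.evalFrom (M.evalFrom (q j) (List.replicate h₁ false))
            (List.replicate (L - h₁) false) := by rw [heq]
      _ = M.evalFrom (q j) (List.replicate (h₁ + (L - h₁)) false) := (hsplit _ _ _).symm
      _ = M.evalFrom (q j) (List.replicate L false) := by rw [Nat.add_sub_cancel' hh₁.le]
  -- representative choice
  have hex : ∀ e ∈ Finset.image f Finset.univ, ∃ i, f i = e := by
    intro e he
    rcases Finset.mem_image.mp he with ⟨i, _, hi⟩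
    exact ⟨i, hi⟩
  classical
  let r : σ → Fin n := fun e => if h : ∃ i, f i = e then h.choose else Classical.arbitrary _
  have hr : ∀ e ∈ Finset.image f Finset.univ, f (r e) = e := by
    intro e he
    have h := hex e he
    simp only [r, dif_pos h]
    exact h.choose_spec
  -- injection from image ×ˢ range L into σ
  have hinj : Set.InjOn (fun p : σ × ℕ => M.evalFrom (q (r p.1)) (List.replicate p.2 false))
      (((Finset.image f Finset.univ) ×ˢ Finset.range L : Finset (σ × ℕ)) : Set (σ × ℕ)) := by
    intro p₁ hp₁ p₂ hp₂ heq
    simp only [Finset.coe_product, Set.mem_prod, Finset.mem_coe, Finset.mem_range,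
      Finset.coe_range, Set.mem_Iio] at hp₁ hp₂
    obtain ⟨he₁, hh₁⟩ := hp₁
    obtain ⟨he₂, hh₂⟩ := hp₂
    rcases le_total p₁.2 p₂.2 with hle | hle
    · obtain ⟨h1, h2⟩ := step (r p₁.1) (r p₂.1) p₁.2 p₂.2 hh₁ hh₂ hle heq
      have : p₁.1 = p₂.1 := by rw [← hr _ he₁, ← hr _ he₂, h2]
      exact Prod.ext this h1
    · obtain ⟨h1, h2⟩ := step (r p₂.1) (r p₁.1) p₂.2 p₁.2 hh₂ hh₁ hle heq.symm
      have : p₁.1 = p₂.1 := by rw [← hr _ he₁, ← hr _ he₂, h2]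
      exact Prod.ext this h1.symm
  have hcard : ((Finset.image f Finset.univ) ×ˢ Finset.range L).card ≤ Fintype.card σ := by
    have := Finset.card_le_card_of_injOn
      (fun p : σ × ℕ => M.evalFrom (q (r p.1)) (List.replicate p.2 false))
      (fun p _ => Finset.mem_univ _) hinj
    simpa using this
  rw [Finset.card_product, Finset.card_range] at hcard
  by_contra hcon
  push_neg at hcon
  have : (K + 1) * L ≤ (Finset.image f Finset.univ).card * L :=
    Nat.mul_le_mul_right L hcon
  omega
end

section
/- If a simple undirected graph G = (V, E) admits a proper K-coloring, then the DFA sample (Z₊, Z₋) over the alphabet Σ = V ∪ E, where Z₊ = {ε} ∪ { v_i e_{ij} : {v_i, v_j} ∈ E, i < j } and Z₋ = V ∪ { v_j e_{ij} : {v_i, v_j} ∈ E, i < j }, admits a consistent DFA with at most K+1 states. -/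
open Sum in
/-- Zhang's reduction, forward direction: if a graph admits a proper
`K`-coloring, then the sample `(Z₊, Z₋)` over the alphabet `V ∪ E` admits a
consistent DFA with at most `K + 1` states. -/
theorem zhang_coloring_to_dfa (n K : ℕ) (G : SimpleGraph (Fin n))
    (Φ : Fin n → Fin K) (hΦ : ∀ i j, G.Adj i j → Φ i ≠ Φ j) :
    ∃ (σ : Type) (_ : Fintype σ) (M : DFA (Fin n ⊕ Sym2 (Fin n)) σ),
      Fintype.card σ ≤ K + 1 ∧
      -- Z₊ = {ε} ∪ { v_i e_{ij} : {v_i,v_j} ∈ E, i < j }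
      (∀ w ∈ ({[]} ∪
          {w | ∃ i j, G.Adj i j ∧ i < j ∧ w = [inl i, inr s(i, j)]} :
          Set (List (Fin n ⊕ Sym2 (Fin n)))),
        M.eval w ∈ M.accept) ∧
      -- Z₋ = V ∪ { v_j e_{ij} : {v_i,v_j} ∈ E, i < j }
      (∀ w ∈ ({w | ∃ i : Fin n, w = [inl i]} ∪
          {w | ∃ i j, G.Adj i j ∧ i < j ∧ w = [inl j, inr s(i, j)]} :
          Set (List (Fin n ⊕ Sym2 (Fin n)))),
        M.eval w ∉ M.accept) := by
  classical
  -- minimum endpoint of an edge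
  let sm : Sym2 (Fin n) → Fin n := Sym2.lift ⟨fun a b => min a b, fun a b => min_comm a b⟩
  refine ⟨Option (Fin K), inferInstance,
    { step := fun s a =>
        match s, a with
        | none, inl i => some (Φ i)
        | none, inr _ => none
        | some c, inl _ => some c
        | some c, inr e => if c = Φ (sm e) then none else some c,
      start := none,
      accept := {none} }, ?_, ?_, ?_⟩
  · simp
  · rintro w (rfl | ⟨i, j, hadj, hij, rfl⟩)
    · simp [DFA.eval, DFA.evalFrom]
    · have : sm s(i, j) = i := by
        simp only [sm, Sym2.lift_mk]
        exact min_eq_left hij.le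
      simp [DFA.eval, DFA.evalFrom, this]
  · rintro w (⟨i, rfl⟩ | ⟨i, j, hadj, hij, rfl⟩)
    · simp [DFA.eval, DFA.evalFrom]
    · have h1 : sm s(i, j) = i := by
        simp only [sm, Sym2.lift_mk]
        exact min_eq_left hij.le
      have h2 : Φ j ≠ Φ i := hΦ j i hadj.symm
      simp [DFA.eval, DFA.evalFrom, h1, h2]
end

section
/- If the DFA sample (Z₊, Z₋) over Σ = V ∪ E, where Z₊ = {ε} ∪ { v_i e_{ij} : {v_i, v_j} ∈ E, i < j } and Z₋ = V ∪ { v_j e_{ij} : {v_i, v_j} ∈ E, i < j }, admits a consistent DFA with at most K+1 states, then the graph G = (V, E) admits a proper K-coloring. -/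
/-!
Colour each vertex `v` by the state the DFA reaches after reading `v`. Since `ε` is accepted
and `v` is rejected, this state is never the initial one, which leaves at most `K` colours.
For an edge `{vᵢ, vⱼ}` with `i < j`, the suffix `e_{ij}` is accepted after `vᵢ` and rejected
after `vⱼ`, so adjacent vertices reach different states.
-/

namespace DFA

variable {α σ : Type*} (M : DFA α σ)

theorem eval_ne_of_mem_accepts_append {u v w : List α} (hu : u ++ w ∈ M.accepts)
    (hv : v ++ w ∉ M.accepts) : M.eval u ≠ M.eval v := by
  have eval_append : ∀ x, M.eval (x ++ w) = M.evalFrom (M.eval x) w :=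
    fun x => M.evalFrom_of_append _ _ _
  rw [mem_accepts, eval_append] at hu hv
  exact fun h => hv (h ▸ hu)

end DFA

open Sum in
theorem SimpleGraph.colorable_of_dfa_consistent {V σ : Type*} [LinearOrder V] [Fintype σ]
    {G : SimpleGraph V} (M : DFA (V ⊕ Sym2 V) σ) (hstart : M.start ∈ M.accept)
    (hvertex : ∀ i, M.eval [inl i] ∉ M.accept)
    (hpos : ∀ i j, G.Adj i j → i < j → M.eval [inl i, inr s(i, j)] ∈ M.accept)
    (hneg : ∀ i j, G.Adj i j → i < j → M.eval [inl j, inr s(i, j)] ∉ M.accept) :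
    G.Colorable (Fintype.card σ - 1) := by
  classical
  have separated : ∀ i j, G.Adj i j → i < j → M.eval [inl i] ≠ M.eval [inl j] :=
    fun i j hadj hlt =>
      M.eval_ne_of_mem_accepts_append (w := [inr s(i, j)]) (hpos i j hadj hlt)
        (hneg i j hadj hlt)
  let C : G.Coloring {q : σ // q ≠ M.start} :=
    Coloring.mk (fun i => ⟨M.eval [inl i], fun h => hvertex i (h ▸ hstart)⟩)
      fun {i j} hadj heq => by
        have heq := congrArg Subtype.val heq
        rcases (G.ne_of_adj hadj).lt_or_gt with hlt | hlt
        · exact separated i j hadj hlt heq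
        · exact separated j i hadj.symm hlt heq.symm
  simpa [Fintype.card_subtype_compl] using C.colorable

open Sum in
/-- Zhang's reduction, backward direction: if the sample `(Z₊, Z₋)` over the
alphabet `V ∪ E` admits a consistent DFA with at most `K + 1` states, then the
graph admits a proper `K`-coloring. -/
theorem zhang_dfa_to_coloring (n K : ℕ) (G : SimpleGraph (Fin n))
    (h : ∃ (σ : Type) (_ : Fintype σ) (M : DFA (Fin n ⊕ Sym2 (Fin n)) σ),
      Fintype.card σ ≤ K + 1 ∧
      (∀ w ∈ ({[]} ∪
          {w | ∃ i j, G.Adj i j ∧ i < j ∧ w = [inl i, inr s(i, j)]} :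
          Set (List (Fin n ⊕ Sym2 (Fin n)))),
        M.eval w ∈ M.accept) ∧
      (∀ w ∈ ({w | ∃ i : Fin n, w = [inl i]} ∪
          {w | ∃ i j, G.Adj i j ∧ i < j ∧ w = [inl j, inr s(i, j)]} :
          Set (List (Fin n ⊕ Sym2 (Fin n)))),
        M.eval w ∉ M.accept)) :
    ∃ Φ : Fin n → Fin K, ∀ i j, G.Adj i j → Φ i ≠ Φ j := by
  obtain ⟨σ, _, M, hcard, hpos, hneg⟩ := h
  obtain ⟨C⟩ : G.Colorable K :=
    (G.colorable_of_dfa_consistent M (hpos [] (Or.inl rfl))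
      (fun i => hneg _ (Or.inl ⟨i, rfl⟩))
      (fun i j hadj hlt => hpos _ (Or.inr ⟨i, j, hadj, hlt, rfl⟩))
      (fun i j hadj hlt => hneg _ (Or.inr ⟨i, j, hadj, hlt, rfl⟩))).mono (by omega)
  exact ⟨C, fun _ _ hadj => C.valid hadj⟩
end

section
/- For any DFA M over a binary alphabet, if M is consistent with a sample (D₊, D₋) where ṽ_i 0^L ∈ D₊, ṽ_i 0^h ∈ D₋ for all h < L (for each i ∈ [1, n]), and for each edge e_{ij} with i < j the strings ṽ_i 0^L ẽ_{ij} ∈ D₊ and ṽ_j 0^L ẽ_{ij} ∈ D₋, and M has fewer than (K+1)·L states, then the map Φ(v_i) := δ*(q₀, ṽ_i 0^L) induces a proper coloring of the graph G = (V, E) using at most K colors. -/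
lemma evalFrom_replicate_false {σ : Type*} (M : DFA Bool σ) (q : σ) (h : ℕ) :
    M.evalFrom q (List.replicate h false) = (fun s => M.step s false)^[h] q := by
  induction h generalizing q with
  | zero => rfl
  | succ h ih =>
    rw [List.replicate_succ]
    show M.evalFrom (M.step q false) (List.replicate h false) = _
    rw [ih, Function.iterate_succ_apply]

/-- If a binary DFA `M` is consistent with a sample containing
`ṽ_i 0^L ∈ D₊`, `ṽ_i 0^h ∈ D₋` for `h < L`, and for each edge `{v_i,v_j}` with
`i < j` the strings `ṽ_i 0^L ẽ_{ij} ∈ D₊` and `ṽ_j 0^L ẽ_{ij} ∈ D₋`, and `M`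
has fewer than `(K+1)·L` states, then `Φ(v_i) := δ*(q₀, ṽ_i 0^L)` induces a
proper coloring of `G` using at most `K` colors. -/
theorem dfa_induces_coloring {σ : Type*} [Fintype σ] [DecidableEq σ]
    (n K L : ℕ) (G : SimpleGraph (Fin n))
    (venc : Fin n → List Bool) (eenc : Sym2 (Fin n) → List Bool)
    (M : DFA Bool σ)
    (hsize : Fintype.card σ < (K + 1) * L)
    (haccV : ∀ i, M.eval (venc i ++ List.replicate L false) ∈ M.accept)
    (hrejV : ∀ i, ∀ h < L, M.eval (venc i ++ List.replicate h false) ∉ M.accept)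
    (haccE : ∀ i j, G.Adj i j → i < j →
      M.eval (venc i ++ List.replicate L false ++ eenc s(i, j)) ∈ M.accept)
    (hrejE : ∀ i j, G.Adj i j → i < j →
      M.eval (venc j ++ List.replicate L false ++ eenc s(i, j)) ∉ M.accept) :
    (∀ i j, G.Adj i j →
        M.eval (venc i ++ List.replicate L false) ≠
          M.eval (venc j ++ List.replicate L false)) ∧
    (Finset.image (fun i => M.eval (venc i ++ List.replicate L false))
        Finset.univ).card ≤ K := by
  classical
  set f : σ → σ := fun s => M.step s false with hf
  set q : Fin n → σ := fun i => M.eval (venc i) with hq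
  -- rewrite eval of concatenations
  have heval : ∀ i h, M.eval (venc i ++ List.replicate h false) = f^[h] (q i) := by
    intro i h
    rw [DFA.eval, DFA.evalFrom_of_append, evalFrom_replicate_false]
    rfl
  have hacc : ∀ i, f^[L] (q i) ∈ M.accept := fun i => heval i L ▸ haccV i
  have hrej : ∀ i, ∀ h < L, f^[h] (q i) ∉ M.accept := by
    intro i h hh
    have := hrejV i h hh
    rwa [heval] at this
  -- key lemma
  have key : ∀ a b, a < L → b < L → ∀ i j, f^[a] (q i) = f^[b] (q j) →
      a = b ∧ f^[L] (q i) = f^[L] (q j) := by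
    intro a b ha hb i j hE
    have hab : a = b := by
      by_contra hne
      rcases Nat.lt_or_ge a b with hlt | hge
      · -- f^[L-b] of both sides
        have h1 : f^[L - b] (f^[b] (q j)) = f^[L] (q j) := by
          rw [← Function.iterate_add_apply]; congr 1; omega
        have h2 : f^[L - b] (f^[a] (q i)) = f^[L - b + a] (q i) := by
          rw [← Function.iterate_add_apply]
        have : f^[L - b + a] (q i) ∈ M.accept := by
          rw [← h2, hE, h1]; exact hacc j
        exact hrej i (L - b + a) (by omega) this
      · have hlt : b < a := by omega
        have h1 : f^[L - a] (f^[a] (q i)) = f^[L] (q i) := by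
          rw [← Function.iterate_add_apply]; congr 1; omega
        have h2 : f^[L - a] (f^[b] (q j)) = f^[L - a + b] (q j) := by
          rw [← Function.iterate_add_apply]
        have : f^[L - a + b] (q j) ∈ M.accept := by
          rw [← h2, ← hE, h1]; exact hacc i
        exact hrej j (L - a + b) (by omega) this
    subst hab
    refine ⟨rfl, ?_⟩
    have h1 : f^[L - a] (f^[a] (q i)) = f^[L] (q i) := by
      rw [← Function.iterate_add_apply]; congr 1; omega
    have h2 : f^[L - a] (f^[a] (q j)) = f^[L] (q j) := by
      rw [← Function.iterate_add_apply]; congr 1; omega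
    rw [← h1, ← h2, hE]
  have hL : 0 < L := by
    rcases Nat.eq_zero_or_pos L with h | h
    · subst h; simp at hsize
    · exact h
  constructor
  · -- proper coloring
    intro i j hadj heq
    rcases lt_or_gt_of_ne (G.ne_of_adj hadj) with hlt | hlt
    · have hA := haccE i j hadj hlt
      have hR := hrejE i j hadj hlt
      rw [DFA.eval, DFA.evalFrom_of_append] at hA hR
      have : M.evalFrom M.start (venc i ++ List.replicate L false)
           = M.evalFrom M.start (venc j ++ List.replicate L false) := heq
      rw [this] at hA
      exact hR hA
    · have hA := haccE j i hadj.symm hlt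
      have hR := hrejE j i hadj.symm hlt
      rw [DFA.eval, DFA.evalFrom_of_append] at hA hR
      have : M.evalFrom M.start (venc j ++ List.replicate L false)
           = M.evalFrom M.start (venc i ++ List.replicate L false) := heq.symm
      rw [this] at hA
      exact hR hA
  · -- at most K colors
    set S : Finset σ :=
      Finset.image (fun i => M.eval (venc i ++ List.replicate L false)) Finset.univ with hS
    rcases S.eq_empty_or_nonempty with hSe | hSne
    · rw [hSe]; simp
    · have hn : Nonempty (Fin n) := by
        obtain ⟨c, hc⟩ := hSne
        rw [hS, Finset.mem_image] at hc
        obtain ⟨i, _, _⟩ := hc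
        exact ⟨i⟩
      have pick : ∀ c ∈ S, ∃ i : Fin n, f^[L] (q i) = c := by
        intro c hc
        rw [hS, Finset.mem_image] at hc
        obtain ⟨i, _, hi⟩ := hc
        exact ⟨i, by rw [← heval]; exact hi⟩
      let p : σ → Fin n := fun c =>
        if h : ∃ i : Fin n, f^[L] (q i) = c then h.choose else Classical.arbitrary _
      have hp : ∀ c ∈ S, f^[L] (q (p c)) = c := by
        intro c hc
        have h := pick c hc
        simp only [p, dif_pos h]
        exact h.choose_spec
      -- injection from S ×ˢ range L into σ
      have hcard : (S ×ˢ Finset.range L).card ≤ Fintype.card σ := by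
        rw [← Finset.card_univ]
        apply Finset.card_le_card_of_injOn (fun x => f^[x.2] (q (p x.1)))
        · intro x _; exact Finset.mem_univ _
        · rintro ⟨c, a⟩ hca ⟨c', b⟩ hcb hE
          simp only [Finset.mem_coe, Finset.mem_product, Finset.mem_range] at hca hcb
          obtain ⟨ha, hb⟩ := key a b hca.2 hcb.2 (p c) (p c') hE
          have : c = c' := by rw [← hp c hca.1, ← hp c' hcb.1, hb]
          simp [ha, this]
      rw [Finset.card_product, Finset.card_range] at hcard
      have : S.card * L < (K + 1) * L := lt_of_le_of_lt hcard hsize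
      have := Nat.lt_of_mul_lt_mul_right this
      omega
end

section
/- Let M be a DFA over {0,1} with at most N + (K+1)·L states where N > (K+1)·L, and suppose M rejects 0^N but accepts 0^j for every j ∈ [1, N−1]. Then for any string s such that M accepts s·0^j for all j ∈ [1, N−1] and rejects s·0^N, we have δ*(q₀, s·0^N) = δ*(q₀, 0^N). -/
private lemma chain_step {σ : Type*} (M : DFA Bool σ) (p : List Bool) {a b : ℕ} (h : a ≤ b) :
    M.eval (p ++ List.replicate b false)
      = M.evalFrom (M.eval (p ++ List.replicate a false)) (List.replicate (b - a) false) := by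
  have hb : List.replicate b false
      = List.replicate a false ++ List.replicate (b - a) false := by
    rw [← List.replicate_add]; congr 1; omega
  rw [hb, ← List.append_assoc]
  simp only [DFA.eval]
  exact M.evalFrom_of_append _ _ _

private lemma no_cross {σ : Type*} (M : DFA Bool σ) (N : ℕ) (p q : List Bool)
    (haccp : ∀ j, 1 ≤ j → j ≤ N - 1 → M.eval (p ++ List.replicate j false) ∈ M.accept)
    (hrejq : M.eval (q ++ List.replicate N false) ∉ M.accept)
    {a b : ℕ} (ha : 1 ≤ a) (hb : b ≤ N) (hab : a < b)
    (heq : M.eval (p ++ List.replicate a false) = M.eval (q ++ List.replicate b false)) :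
    False := by
  have h1 : M.eval (q ++ List.replicate N false)
      = M.eval (p ++ List.replicate (a + (N - b)) false) := by
    rw [chain_step M q hb, chain_step M p (Nat.le_add_right a (N - b)), heq]
    congr 2
    omega
  rw [h1] at hrejq
  exact hrejq (haccp (a + (N - b)) (by omega) (by omega))

/-- If a binary DFA with at most `N + (K+1)·L` states (where `N > (K+1)·L`)
rejects `0^N` but accepts `0^j` for all `j ∈ [1, N-1]`, then for any string `s`
such that `s·0^j` is accepted for all `j ∈ [1, N-1]` and `s·0^N` is rejected,
the states reached on `s·0^N` and on `0^N` coincide. -/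
theorem long_zero_chain_unique {σ : Type*} [Fintype σ]
    (M : DFA Bool σ) (N K L : ℕ)
    (hN : (K + 1) * L < N)
    (hsize : Fintype.card σ ≤ N + (K + 1) * L)
    (hrej0 : M.eval (List.replicate N false) ∉ M.accept)
    (hacc0 : ∀ j, 1 ≤ j → j ≤ N - 1 → M.eval (List.replicate j false) ∈ M.accept)
    (s : List Bool)
    (haccs : ∀ j, 1 ≤ j → j ≤ N - 1 →
      M.eval (s ++ List.replicate j false) ∈ M.accept)
    (hrejs : M.eval (s ++ List.replicate N false) ∉ M.accept) :
    M.eval (s ++ List.replicate N false) = M.eval (List.replicate N false) := by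
  -- restate the `0^j` hypotheses with an explicit `[] ++` prefix
  have hacc0' : ∀ j, 1 ≤ j → j ≤ N - 1 →
      M.eval (([] : List Bool) ++ List.replicate j false) ∈ M.accept := by
    simpa using hacc0
  have hrej0' : M.eval (([] : List Bool) ++ List.replicate N false) ∉ M.accept := by
    simpa using hrej0
  set f : Fin N → σ := fun k => M.eval (([] : List Bool) ++ List.replicate (k.1 + 1) false) with hfdef
  set g : Fin N → σ := fun k => M.eval (s ++ List.replicate (k.1 + 1) false) with hgdef
  have hf : Function.Injective f := by
    intro i j hij
    rcases lt_trichotomy i.1 j.1 with h | h | h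
    · exact absurd hij (fun hc =>
        no_cross M N [] [] hacc0' hrej0' (by omega) (by omega : j.1 + 1 ≤ N) (by omega) hc)
    · exact Fin.ext h
    · exact absurd hij.symm (fun hc =>
        no_cross M N [] [] hacc0' hrej0' (by omega) (by omega : i.1 + 1 ≤ N) (by omega) hc)
  have hg : Function.Injective g := by
    intro i j hij
    rcases lt_trichotomy i.1 j.1 with h | h | h
    · exact absurd hij (fun hc =>
        no_cross M N s s haccs hrejs (by omega) (by omega : j.1 + 1 ≤ N) (by omega) hc)
    · exact Fin.ext h
    · exact absurd hij.symm (fun hc =>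
        no_cross M N s s haccs hrejs (by omega) (by omega : i.1 + 1 ≤ N) (by omega) hc)
  classical
  -- pigeonhole: the two ranges must intersect
  have hnd : ¬ Disjoint (Finset.univ.image f) (Finset.univ.image g) := by
    intro hd
    have hcard := Finset.card_le_univ ((Finset.univ.image f) ∪ (Finset.univ.image g))
    rw [Finset.card_union_of_disjoint hd, Finset.card_image_of_injective _ hf,
      Finset.card_image_of_injective _ hg, Finset.card_univ, Fintype.card_fin] at hcard
    omega
  obtain ⟨x, hx1, hx2⟩ := Finset.not_disjoint_iff.mp hnd
  obtain ⟨i, -, hi⟩ := Finset.mem_image.mp hx1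
  obtain ⟨j, -, hj⟩ := Finset.mem_image.mp hx2
  have heq : f i = g j := hi.trans hj.symm
  -- the meeting indices must be equal
  have hij : i.1 = j.1 := by
    rcases lt_trichotomy i.1 j.1 with h | h | h
    · exact absurd heq (fun hc =>
        no_cross M N [] s hacc0' hrejs (by omega) (by omega : j.1 + 1 ≤ N) (by omega) hc)
    · exact h
    · exact absurd heq.symm (fun hc =>
        no_cross M N s [] haccs hrej0' (by omega) (by omega : i.1 + 1 ≤ N) (by omega) hc)
  -- conclude: run the remaining zeros from the common state
  have heq' : M.eval (s ++ List.replicate (j.1 + 1) false)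
      = M.eval (([] : List Bool) ++ List.replicate (j.1 + 1) false) := by
    have := heq
    simp only [hfdef, hgdef] at this
    rw [hij] at this
    exact this.symm
  have h1 : j.1 + 1 ≤ N := by omega
  calc M.eval (s ++ List.replicate N false)
      = M.evalFrom (M.eval (s ++ List.replicate (j.1 + 1) false))
          (List.replicate (N - (j.1 + 1)) false) := chain_step M s h1
    _ = M.evalFrom (M.eval (([] : List Bool) ++ List.replicate (j.1 + 1) false))
          (List.replicate (N - (j.1 + 1)) false) := by rw [heq']
    _ = M.eval (([] : List Bool) ++ List.replicate N false) := (chain_step M [] h1).symm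
    _ = M.eval (List.replicate N false) := by simp
end

section
/- Let M be a DFA over {0,1} and suppose there are indices i ≠ j and strings u_i, u_j, w with u_i w accepted and u_j w rejected by M. Suppose additionally that, for each of u_i and u_j, reading 0^h after them (h < L) leads to rejecting states while reading 0^L leads to accepting states. If δ*(q₀, u_i 0^L) ≠ δ*(q₀, u_j 0^L), then the two 0-chains {δ*(q₀, u_i 0^h) : h ≤ L} and {δ*(q₀, u_j 0^h) : h ≤ L} are disjoint, so M has at least 2(L+1) states among them. -/
private lemma chain_prop {σ : Type*} (M : DFA Bool σ) (u v : List Bool)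
    (h h' k : ℕ)
    (he : M.eval (u ++ List.replicate h false) = M.eval (v ++ List.replicate h' false)) :
    M.eval (u ++ List.replicate (h + k) false) =
      M.eval (v ++ List.replicate (h' + k) false) := by
  have h1 : ∀ (x : List Bool), M.eval (x ++ List.replicate k false) =
      M.evalFrom (M.eval x) (List.replicate k false) := fun x => M.evalFrom_of_append _ _ _
  rw [List.replicate_add, List.replicate_add, ← List.append_assoc, ← List.append_assoc,
    h1, h1, he]

/-- Two 0-chains with the reject-below-`L`/accept-at-`L` pattern whose
endpoints are distinguished are disjoint, so the DFA has at least `2(L+1)`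
states. -/
theorem disjoint_zero_chains {σ : Type*} [Fintype σ]
    (M : DFA Bool σ) (L : ℕ) (u₁ u₂ w : List Bool)
    (hacc : M.eval (u₁ ++ w) ∈ M.accept)
    (hrej : M.eval (u₂ ++ w) ∉ M.accept)
    (hrej₁ : ∀ h < L, M.eval (u₁ ++ List.replicate h false) ∉ M.accept)
    (hacc₁ : M.eval (u₁ ++ List.replicate L false) ∈ M.accept)
    (hrej₂ : ∀ h < L, M.eval (u₂ ++ List.replicate h false) ∉ M.accept)
    (hacc₂ : M.eval (u₂ ++ List.replicate L false) ∈ M.accept)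
    (hne : M.eval (u₁ ++ List.replicate L false) ≠
      M.eval (u₂ ++ List.replicate L false)) :
    Disjoint
      {q | ∃ h ≤ L, q = M.eval (u₁ ++ List.replicate h false)}
      {q | ∃ h ≤ L, q = M.eval (u₂ ++ List.replicate h false)} ∧
    2 * (L + 1) ≤ Fintype.card σ := by
  -- key: if chains meet at heights h ≤ L, h' ≤ L then h = h' and endpoints coincide
  have key : ∀ h ≤ L, ∀ h' ≤ L,
      M.eval (u₁ ++ List.replicate h false) = M.eval (u₂ ++ List.replicate h' false) → False := by
    intro h hL h' hL' he
    rcases le_total h h' with hle | hle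
    · have h1 := chain_prop M u₁ u₂ h h' (L - h') he
      rw [Nat.add_sub_cancel' hL'] at h1
      have : h + (L - h') = L := by
        by_contra hne2
        exact hrej₁ _ (lt_of_le_of_ne (by omega) hne2) (h1 ▸ hacc₂)
      have hhh : h = h' := by omega
      subst hhh
      rw [this] at h1
      have h2 := chain_prop M u₁ u₂ h h (L - h) he
      rw [Nat.add_sub_cancel' hL] at h2
      exact hne h2
    · have h1 := chain_prop M u₁ u₂ h h' (L - h) he
      rw [Nat.add_sub_cancel' hL] at h1
      have : h' + (L - h) = L := by
        by_contra hne2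
        exact hrej₂ _ (lt_of_le_of_ne (by omega) hne2) (h1 ▸ hacc₁)
      have hhh : h = h' := by omega
      subst hhh
      have h2 := chain_prop M u₁ u₂ h h (L - h) he
      rw [Nat.add_sub_cancel' hL] at h2
      exact hne h2
  -- injectivity within a chain
  have inj : ∀ (u : List Bool),
      M.eval (u ++ List.replicate L false) ∈ M.accept →
      (∀ h < L, M.eval (u ++ List.replicate h false) ∉ M.accept) →
      ∀ h ≤ L, ∀ h' ≤ L,
        M.eval (u ++ List.replicate h false) = M.eval (u ++ List.replicate h' false) →
        h = h' := by
    intro u hA hR h hL h' hL' he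
    rcases le_total h h' with hle | hle
    · have h1 := chain_prop M u u h h' (L - h') he
      rw [Nat.add_sub_cancel' hL'] at h1
      by_contra hne2
      exact hR _ (by omega) (h1 ▸ hA)
    · have h1 := chain_prop M u u h' h (L - h) he.symm
      rw [Nat.add_sub_cancel' hL] at h1
      by_contra hne2
      exact hR _ (by omega) (h1 ▸ hA)
  constructor
  · rw [Set.disjoint_left]
    rintro q ⟨h, hL, rfl⟩ ⟨h', hL', he⟩
    exact key h hL h' hL' he
  · have : Function.Injective (fun x : Fin (L + 1) ⊕ Fin (L + 1) =>
        Sum.elim (fun i : Fin (L + 1) => M.eval (u₁ ++ List.replicate (i : ℕ) false))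
          (fun i : Fin (L + 1) => M.eval (u₂ ++ List.replicate (i : ℕ) false)) x) := by
      rintro (a | a) (b | b) hab <;> simp only [Sum.elim_inl, Sum.elim_inr] at hab
      · have := inj u₁ hacc₁ hrej₁ a (by omega) b (by omega) hab
        exact congrArg Sum.inl (Fin.ext this)
      · exact absurd hab (fun he => key a (by omega) b (by omega) he)
      · exact absurd hab.symm (fun he => key b (by omega) a (by omega) he)
      · have := inj u₂ hacc₂ hrej₂ a (by omega) b (by omega) hab
        exact congrArg Sum.inr (Fin.ext this)
    have := Fintype.card_le_of_injective _ this
    simpa [two_mul] using this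
end

section
/- Suppose that for a fixed construction the following relationship to graphs holds: G is K-colorable iff the constructed sample admits a consistent DFA with fewer than (K+1)L states, where L is fixed per graph. If a DFA of size m̂ consistent with the sample is found, then G is k̂-colorable for k̂ = ⌊m̂ / L⌋, and the approximation ratio satisfies k̂ / k* < 2 m̂ / m*, where k* is the chromatic number of G and m* is the minimum consistent DFA size. -/
/-- Approximation transfer: assume the reduction equivalence "`G` is
`K`-colorable iff the constructed sample admits a consistent DFA with fewer
than `(K+1)·L` states", where `consDFA m` means that some consistent DFA has
exactly `m` states.  If a consistent DFA of size `m̂` is found, then `G` is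
`⌊m̂/L⌋`-colorable and the approximation ratio satisfies
`k̂ / k* < 2·m̂ / m*` (stated cross-multiplied), where `k*` is the chromatic
number of `G` and `m*` the minimum consistent DFA size. -/
theorem approximation_transfer {V : Type*} [Fintype V] [Nonempty V]
    (G : SimpleGraph V) (L : ℕ) (hL : 0 < L)
    (consDFA : ℕ → Prop)
    (hmono : ∀ m m', m ≤ m' → consDFA m → consDFA m')
    (hred : ∀ K, G.Colorable K ↔ ∃ m, m < (K + 1) * L ∧ consDFA m)
    (mhat : ℕ) (hmhat : consDFA mhat) (hmhatpos : 0 < mhat)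
    (kstar : ℕ) (hkcol : G.Colorable kstar)
    (hkmin : ∀ K, G.Colorable K → kstar ≤ K)
    (mstar : ℕ) (hmcons : consDFA mstar)
    (hmmin : ∀ m, consDFA m → mstar ≤ m) :
    G.Colorable (mhat / L) ∧ (mhat / L) * mstar < 2 * mhat * kstar := by
  have hcol : G.Colorable (mhat / L) := by
    refine (hred _).2 ⟨mhat, ?_, hmhat⟩
    have h1 := Nat.div_add_mod mhat L
    have h2 := Nat.mod_lt mhat hL
    nlinarith [Nat.div_add_mod mhat L]
  refine ⟨hcol, ?_⟩
  have hk1 : 1 ≤ kstar := by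
    rcases Nat.eq_zero_or_pos kstar with h | h
    · exfalso
      subst h
      obtain ⟨c⟩ := hkcol
      exact (c (Classical.arbitrary V)).elim0
    · exact h
  obtain ⟨m, hm, hc⟩ := (hred kstar).1 hkcol
  have hms : mstar < (kstar + 1) * L := lt_of_le_of_lt (hmmin m hc) hm
  have hms2 : mstar < 2 * kstar * L := lt_of_lt_of_le hms (by nlinarith)
  have hdiv : (mhat / L) * L ≤ mhat := Nat.div_mul_le_self mhat L
  rcases Nat.eq_zero_or_pos (mhat / L) with h0 | h0
  · rw [h0, Nat.zero_mul]; positivity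
  · nlinarith [hdiv, hms2, h0]
end
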